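/- arXiv:1201.6152 — 5 statements merged into one kernel-verified Lean document; each statement's English description precedes it below -/
import Mathlib

section
/- Let p > 2 be a prime and let a, b be integers with a > 0, b ≥ 0 and gcd(a, p) = 1, and let r₀ ∈ {0, 1, ..., p-1} satisfy a·r₀ + b ≡ 0 (mod p). Then ∑_{k=1}^{p-1} q^{bk}/[ak]_q ≡ (1-q)·((p-1)/2 − r₀) (mod [p]_q). -/
open Polynomial Finset

noncomputable section

/-- The `q`-integer `[n]_q = 1 + q + ⋯ + q^(n-1)`, as a polynomial in `ℚ[q]`. -/
def qIntP (n : ℕ) : Polynomial ℚ := ∑ i ∈ Finset.range n, X ^ i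

/-- The `q`-integer `[n]_q` viewed in the field of rational functions `ℚ(q)`. -/
def qN (n : ℕ) : RatFunc ℚ := algebraMap (Polynomial ℚ) (RatFunc ℚ) (qIntP n)

/-- The `q`-Pochhammer symbol `(q; q)_n = ∏_{j=1}^{n} (1 - q^j)` in `ℚ(q)`. -/
def qqPoch (n : ℕ) : RatFunc ℚ :=
  algebraMap (Polynomial ℚ) (RatFunc ℚ) (∏ j ∈ Finset.range n, (1 - X ^ (j + 1)))

/-- The `q`-Pochhammer symbol `(-q; q)_n = ∏_{j=1}^{n} (1 + q^j)` in `ℚ(q)`. -/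
def nqPoch (n : ℕ) : RatFunc ℚ :=
  algebraMap (Polynomial ℚ) (RatFunc ℚ) (∏ j ∈ Finset.range n, (1 + X ^ (j + 1)))

/-- The Gaussian `q`-binomial coefficient, as a rational function. -/
def qbin (n k : ℕ) : RatFunc ℚ :=
  if k ≤ n then qqPoch n / (qqPoch k * qqPoch (n - k)) else 0

/-- `qCong p r x y` means `x ≡ y (mod [p]_q^r)`: the difference `x - y` can be
written as a fraction whose numerator (a polynomial) is divisible by `[p]_q^r`
and whose denominator is relatively prime to `[p]_q`. -/
def qCong (p r : ℕ) (x y : RatFunc ℚ) : Prop :=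
  ∃ a b : Polynomial ℚ, IsCoprime b (qIntP p) ∧
    (x - y) * algebraMap (Polynomial ℚ) (RatFunc ℚ) b =
      algebraMap (Polynomial ℚ) (RatFunc ℚ) (qIntP p ^ r * a)

/-!
`[p]_q` is the `p`-th cyclotomic polynomial, irreducible over `ℚ`, so a congruence modulo `[p]_q`
between rational functions regular at a primitive `p`-th root of unity `ζ` amounts to equality of
their values at `ζ`. There `1 / [ak]_q` becomes `(1 - ζ) / (1 - ω^k)` with `ω = ζ^a` again
primitive, and `q^{bk}` becomes `ξ^k` with `ξ = ω^{-r₀}`. For `ξ = 1` the sum `∑ ξ^k / (1 - ω^k)`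
is `(p - 1) / 2`, by pairing `k` with `p - k`; each further factor `ω⁻¹` in `ξ` lowers it by
`1 = -∑_{k=1}^{p-1} ξ^k`.
-/

section RootsOfUnity

variable {K : Type*} [Field K]

lemma inv_one_sub_add_inv_one_sub {x y : K} (hxy : x * y = 1) (hx : x ≠ 1) (hy : y ≠ 1) :
    (1 - x)⁻¹ + (1 - y)⁻¹ = 1 := by
  have hx' : (1 : K) - x ≠ 0 := sub_ne_zero.2 hx.symm
  have hy' : (1 : K) - y ≠ 0 := sub_ne_zero.2 hy.symm
  field_simp
  linear_combination -hxy

lemma sum_Ico_one_pow_eq_neg_one {ξ : K} {n : ℕ} (hn : 0 < n) (hξn : ξ ^ n = 1) (hξ : ξ ≠ 1) :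
    ∑ k ∈ Ico 1 n, ξ ^ k = -1 := by
  have hgeom := geom_sum_eq hξ n
  rw [hξn, sub_self, zero_div, range_eq_Ico, sum_eq_sum_Ico_succ_bot hn, pow_zero] at hgeom
  linear_combination hgeom

variable {ω : K} {n : ℕ}

lemma IsPrimitiveRoot.pow_ne_one_of_mem_Ico (hω : IsPrimitiveRoot ω n) {k : ℕ}
    (hk : k ∈ Ico 1 n) : ω ^ k ≠ 1 :=
  hω.pow_ne_one_of_pos_of_lt (Nat.one_le_iff_ne_zero.1 (mem_Ico.1 hk).1) (mem_Ico.1 hk).2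

variable [NeZero (2 : K)]

lemma IsPrimitiveRoot.sum_Ico_inv_one_sub_pow (hω : IsPrimitiveRoot ω n) (hn : 0 < n) :
    ∑ k ∈ Ico 1 n, (1 - ω ^ k)⁻¹ = ((n : K) - 1) / 2 := by
  have hreflect : ∑ k ∈ Ico 1 n, (1 - ω ^ (n - k))⁻¹ = ∑ k ∈ Ico 1 n, (1 - ω ^ k)⁻¹ := by
    rw [sum_Ico_reflect (fun k => (1 - ω ^ k)⁻¹) 1 (Nat.le_succ n), Nat.add_sub_cancel_left,
      Nat.add_sub_cancel]
  have hpair : ∑ k ∈ Ico 1 n, ((1 - ω ^ k)⁻¹ + (1 - ω ^ (n - k))⁻¹) = n - 1 := by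
    rw [sum_congr rfl fun k hk => inv_one_sub_add_inv_one_sub ?_ (hω.pow_ne_one_of_mem_Ico hk)
      (hω.pow_ne_one_of_mem_Ico (k := n - k) ?_)]
    · simp [Nat.cast_sub hn]
    · rw [← pow_add, Nat.add_sub_cancel' (mem_Ico.1 hk).2.le, hω.pow_eq_one]
    · simp only [mem_Ico] at hk ⊢
      omega
  rw [sum_add_distrib, hreflect] at hpair
  rw [eq_div_iff two_ne_zero]
  linear_combination hpair

lemma IsPrimitiveRoot.sum_Ico_pow_div_one_sub_pow (hω : IsPrimitiveRoot ω n) {r : ℕ}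
    (hr : r < n) {ξ : K} (hξ : ξ * ω ^ r = 1) :
    ∑ k ∈ Ico 1 n, ξ ^ k / (1 - ω ^ k) = ((n : K) - 1) / 2 - r := by
  induction r generalizing ξ with
  | zero =>
    obtain rfl : ξ = 1 := by simpa using hξ
    simpa using hω.sum_Ico_inv_one_sub_pow (by omega)
  | succ r ih =>
    have hξ1 : ξ ≠ 1 := by
      rintro rfl
      exact hω.pow_ne_one_of_pos_of_lt r.succ_ne_zero hr (by rwa [one_mul] at hξ)
    have hξn : ξ ^ n = 1 := by
      have := congrArg (· ^ n) hξ
      rwa [mul_pow, ← pow_mul, mul_comm (r + 1), pow_mul, hω.pow_eq_one, one_pow, mul_one,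
        one_pow] at this
    have hsplit : ∑ k ∈ Ico 1 n, ξ ^ k / (1 - ω ^ k)
        = ∑ k ∈ Ico 1 n, (ξ * ω) ^ k / (1 - ω ^ k) + ∑ k ∈ Ico 1 n, ξ ^ k := by
      rw [← sum_add_distrib]
      refine sum_congr rfl fun k hk => ?_
      have : 1 - ω ^ k ≠ 0 := sub_ne_zero.2 (hω.pow_ne_one_of_mem_Ico hk).symm
      field_simp
      ring
    rw [hsplit, ih (by omega) (by rw [mul_assoc, ← pow_succ']; exact hξ),
      sum_Ico_one_pow_eq_neg_one (by omega) hξn hξ1]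
    push_cast
    ring

end RootsOfUnity

section Evaluation

variable {F K : Type*} [Field F] [Field K] [Algebra F K]

def HasValueAt (ζ : K) (x : RatFunc F) (v : K) : Prop :=
  ∃ N D : F[X], aeval ζ D ≠ 0 ∧
    x * algebraMap F[X] (RatFunc F) D = algebraMap F[X] (RatFunc F) N ∧
      aeval ζ N = v * aeval ζ D

variable {ζ : K} {x y : RatFunc F} {u v : K}

lemma hasValueAt_algebraMap (ζ : K) (P : F[X]) :
    HasValueAt ζ (algebraMap F[X] (RatFunc F) P) (aeval ζ P) :=
  ⟨P, 1, by simp, by simp, by simp⟩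

lemma HasValueAt.add (hx : HasValueAt ζ x u) (hy : HasValueAt ζ y v) :
    HasValueAt ζ (x + y) (u + v) := by
  obtain ⟨N₁, D₁, hD₁, hx, hN₁⟩ := hx
  obtain ⟨N₂, D₂, hD₂, hy, hN₂⟩ := hy
  refine ⟨N₁ * D₂ + N₂ * D₁, D₁ * D₂, by simp [hD₁, hD₂], ?_, ?_⟩
  · simp only [map_add, map_mul, ← hx, ← hy]
    ring
  · simp only [map_add, map_mul, hN₁, hN₂]
    ring

lemma HasValueAt.neg (hx : HasValueAt ζ x u) : HasValueAt ζ (-x) (-u) := by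
  obtain ⟨N, D, hD, hx, hN⟩ := hx
  exact ⟨-N, D, hD, by rw [map_neg, ← hx, neg_mul], by rw [map_neg, hN, neg_mul]⟩

lemma HasValueAt.sub (hx : HasValueAt ζ x u) (hy : HasValueAt ζ y v) :
    HasValueAt ζ (x - y) (u - v) := by
  simpa only [sub_eq_add_neg] using hx.add hy.neg

lemma HasValueAt.sum {ι : Type*} {s : Finset ι} {f : ι → RatFunc F} {g : ι → K}
    (h : ∀ i ∈ s, HasValueAt ζ (f i) (g i)) : HasValueAt ζ (∑ i ∈ s, f i) (∑ i ∈ s, g i) := by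
  classical
  induction s using Finset.induction_on with
  | empty => simpa using hasValueAt_algebraMap (F := F) ζ 0
  | insert i s hi ih =>
    rw [sum_insert hi, sum_insert hi]
    exact (h i (mem_insert_self i s)).add (ih fun j hj => h j (mem_insert_of_mem hj))

lemma HasValueAt.div (hx : HasValueAt ζ x u) (hy : HasValueAt ζ y v) (hv : v ≠ 0) :
    HasValueAt ζ (x / y) (u / v) := by
  obtain ⟨N₁, D₁, hD₁, hx, hN₁⟩ := hx
  obtain ⟨N₂, D₂, hD₂, hy, hN₂⟩ := hy
  have hN₂0 : aeval ζ N₂ ≠ 0 := by rw [hN₂]; exact mul_ne_zero hv hD₂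
  have hy0 : y ≠ 0 := by
    rintro rfl
    rw [zero_mul, eq_comm, map_eq_zero_iff _ (IsFractionRing.injective _ _)] at hy
    simp [hy] at hN₂0
  refine ⟨N₁ * D₂, D₁ * N₂, by simp [hD₁, hN₂0], ?_, ?_⟩
  · rw [map_mul, map_mul, ← hx, ← hy]
    field_simp
  · rw [map_mul, map_mul, hN₁, hN₂]
    field_simp

end Evaluation

section QIntegers

variable {K : Type*} [Field K] [CharZero K]

lemma one_sub_mul_aeval_qIntP (ζ : K) (n : ℕ) : (1 - ζ) * aeval ζ (qIntP n) = 1 - ζ ^ n := by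
  simp [qIntP, mul_neg_geom_sum]

lemma hasValueAt_X_pow_div_qN {ζ : K} (hζ : ζ ≠ 1) (m : ℕ) {n : ℕ} (hn : ζ ^ n ≠ 1) :
    HasValueAt ζ (RatFunc.X ^ m / qN n) ((1 - ζ) * (ζ ^ m / (1 - ζ ^ n))) := by
  have hζ' : 1 - ζ ≠ 0 := sub_ne_zero.2 hζ.symm
  have hval := one_sub_mul_aeval_qIntP ζ n
  have hne : aeval ζ (qIntP n) ≠ 0 := by
    intro h
    rw [h, mul_zero, eq_comm, sub_eq_zero] at hval
    exact hn hval.symm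
  convert (hasValueAt_algebraMap ζ (X ^ m : ℚ[X])).div (hasValueAt_algebraMap ζ (qIntP n)) hne
    using 1
  · simp [qN]
  · rw [← hval]
    field_simp
    simp

lemma qIntP_eq_cyclotomic {p : ℕ} (hp : p.Prime) : qIntP p = cyclotomic p ℚ := by
  have := Fact.mk hp
  rw [cyclotomic_prime, qIntP]

lemma IsPrimitiveRoot.qCong_one_of_hasValueAt_sub {ζ : K} {p : ℕ} (hp : p.Prime)
    (hζ : IsPrimitiveRoot ζ p) {x y : RatFunc ℚ} (h : HasValueAt ζ (x - y) 0) :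
    qCong p 1 x y := by
  obtain ⟨N, D, hD, hxy, hN⟩ := h
  have hmin : qIntP p = minpoly ℚ ζ :=
    (qIntP_eq_cyclotomic hp).trans (cyclotomic_eq_minpoly_rat hζ hp.pos)
  have hroot : aeval ζ (qIntP p) = 0 := hmin ▸ minpoly.aeval ℚ ζ
  obtain ⟨A, rfl⟩ : qIntP p ∣ N := hmin ▸ minpoly.dvd ℚ ζ (by rw [hN, zero_mul])
  have hirr : Irreducible (qIntP p) :=
    qIntP_eq_cyclotomic hp ▸ cyclotomic.irreducible_rat hp.pos
  refine ⟨A, D, (hirr.coprime_iff_not_dvd.2 ?_).symm, by rwa [pow_one]⟩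
  rintro ⟨E, rfl⟩
  simp [hroot] at hD

end QIntegers

theorem qHarmonic_d1_general (p a b : ℕ) (hp : p.Prime)
    (hap : Nat.gcd a p = 1)
    (r₀ : ℕ) (hr₀ : r₀ < p) (hr : (a * r₀ + b) % p = 0) :
    qCong p 1
      (∑ k ∈ Finset.Icc 1 (p - 1), (RatFunc.X : RatFunc ℚ) ^ (b * k) / qN (a * k))
      ((1 - RatFunc.X) * RatFunc.C (((p : ℚ) - 1) / 2 - (r₀ : ℚ))) := by
  have hζ := Complex.isPrimitiveRoot_exp p hp.ne_zero
  set ζ := Complex.exp (2 * Real.pi * Complex.I / p)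
  have hω : IsPrimitiveRoot (ζ ^ a) p := hζ.pow_of_coprime a hap
  have hξ : ζ ^ b * (ζ ^ a) ^ r₀ = 1 := by
    rw [← pow_mul, ← pow_add, hζ.pow_eq_one_iff_dvd]
    exact Nat.dvd_of_mod_eq_zero (by rwa [add_comm])
  have hterm : ∀ k ∈ Icc 1 (p - 1), HasValueAt ζ (RatFunc.X ^ (b * k) / qN (a * k))
      ((1 - ζ) * ((ζ ^ b) ^ k / (1 - (ζ ^ a) ^ k))) := by
    intro k hk
    have hk' := mem_Icc.1 hk
    have hωk := hω.pow_ne_one_of_pos_of_lt (by omega) (by omega : k < p)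
    rw [← pow_mul] at hωk
    rw [← pow_mul, ← pow_mul]
    exact hasValueAt_X_pow_div_qN (hζ.ne_one hp.one_lt) _ hωk
  refine hζ.qCong_one_of_hasValueAt_sub hp ?_
  convert (HasValueAt.sum hterm).sub
    (hasValueAt_algebraMap ζ ((1 - X) * C (((p : ℚ) - 1) / 2 - r₀))) using 1
  · simp
  · rw [← mul_sum, ← Finset.Ico_add_one_right_eq_Icc, Nat.sub_add_cancel hp.one_lt.le,
       hω.sum_Ico_pow_div_one_sub_pow hr₀ hξ]
    simp

/-- For a prime `p > 2`, integers `a > 0`, `b ≥ 0` with `gcd(a,p) = 1` and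
`r₀ ∈ {0,…,p-1}` with `a r₀ + b ≡ 0 (mod p)`:
`∑_{k=1}^{p-1} q^{bk}/[ak]_q ≡ (1-q)((p-1)/2 − r₀) (mod [p]_q)`. -/
theorem qHarmonic_d1 (p a b : ℕ) (hp : p.Prime) (hp2 : 2 < p)
    (ha : 0 < a) (hap : Nat.gcd a p = 1)
    (r₀ : ℕ) (hr₀ : r₀ < p) (hr : (a * r₀ + b) % p = 0) :
    qCong p 1
      (∑ k ∈ Finset.Icc 1 (p - 1), (RatFunc.X : RatFunc ℚ) ^ (b * k) / qN (a * k))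
      ((1 - RatFunc.X) * RatFunc.C (((p : ℚ) - 1) / 2 - (r₀ : ℚ))) :=
  qHarmonic_d1_general p a b hp hap r₀ hr₀ hr
end
end

section
/- Let p > 2 be a prime and let a, b be integers with a > 0, b ≥ 0 and gcd(a, p) = 1, and let r₀ ∈ {0, 1, ..., p-1} satisfy a·r₀ + b ≡ 0 (mod p). Then ∑_{k=1}^{p-1} q^{bk}/[ak]_q^2 ≡ (1-q)^2·( −(p-1)(p-5)/12 + r₀(p-2-r₀)/2 ) (mod [p]_q). -/
/-!
Since `[p]_q` is the `p`-th cyclotomic polynomial, it is the minimal polynomial of a primitive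
`p`-th root of unity `ζ`, so a congruence modulo `[p]_q` between rational functions whose
denominators do not vanish at `ζ` is an equality of their values at `ζ`.

At `ζ`, `[ak]_q` becomes `(ζ^{ak} - 1)/(ζ - 1)`, and for `x = ζ^{ak} ≠ 1` the identity
`∑_{j<p} j x^j = p/(x - 1)` expands `1/(x - 1)^2` as a double sum over `i, j < p`.
Summing over `k` by orthogonality of the characters `k ↦ ζ^{mk}` leaves
`p⁻² ∑_{i,j<p} i j (p [i + j ≡ r₀ (mod p)] - 1)`, which is an elementary sum of polynomials.
-/

open Polynomial Finset

noncomputable section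

lemma sum_range_natCast (n : ℕ) : ∑ i ∈ range n, (i : ℚ) = n * (n - 1) / 2 := by
  induction n with
  | zero => simp
  | succ n ih => rw [sum_range_succ, ih]; push_cast; ring

lemma sum_range_natCast_sq (n : ℕ) :
    ∑ i ∈ range n, (i : ℚ) ^ 2 = n * (n - 1) * (2 * n - 1) / 6 := by
  induction n with
  | zero => simp
  | succ n ih => rw [sum_range_succ, ih]; push_cast; ring

lemma sum_range_ite_lt_natCast {r n : ℕ} (h : r < n) :
    ∑ i ∈ range n, (if r < i then (i : ℚ) else 0) = n * (n - 1) / 2 - (r + 1) * r / 2 := by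
  have hfilter : (range n).filter (r < ·) = Ico (r + 1) n := by
    ext i; simp only [mem_filter, mem_range, mem_Ico]; omega
  rw [← sum_filter, hfilter, sum_Ico_eq_sub _ h, sum_range_natCast, sum_range_natCast]
  push_cast; ring

lemma sum_range_ite_add_mod_eq {p r i : ℕ} (hr : r < p) (hi : i < p) :
    ∑ j ∈ range p, (if (i + j) % p = r then (j : ℚ) else 0)
      = r - i + if r < i then (p : ℚ) else 0 := by
  set j₀ := if i ≤ r then r - i else r + p - i with hj₀
  have hj₀p : j₀ < p := by rw [hj₀]; split_ifs <;> omega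
  have hmod : ∀ j < p, (i + j) % p = r ↔ j = j₀ := by
    intro j hj
    rcases lt_or_ge (i + j) p with h | h
    · rw [Nat.mod_eq_of_lt h, hj₀]; split_ifs <;> omega
    · rw [Nat.mod_eq_sub_mod h, Nat.mod_eq_of_lt (by omega), hj₀]; split_ifs <;> omega
  rw [sum_congr rfl fun j hj => if_congr (hmod j (mem_range.1 hj)) rfl rfl, sum_ite_eq',
    if_pos (mem_range.2 hj₀p), hj₀]
  split_ifs with hir hri hri <;> try omega
  · rw [Nat.cast_sub hir, add_zero]
  · rw [Nat.cast_sub (by omega), Nat.cast_add]; ring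

lemma sum_range_sum_range_mul_ite_add_mod_eq {p r : ℕ} (hr : r < p) :
    ∑ i ∈ range p, ∑ j ∈ range p, (i : ℚ) * j * (if (i + j) % p = r then (p : ℚ) - 1 else -1)
      = p ^ 2 * (-((p - 1) * (p - 5)) / 12 + r * (p - 2 - r) / 2) := by
  have hrow : ∀ i ∈ range p,
      ∑ j ∈ range p, (i : ℚ) * j * (if (i + j) % p = r then (p : ℚ) - 1 else -1)
        = p * (r * i - i ^ 2 + p * (if r < i then (i : ℚ) else 0)) - i * (p * (p - 1) / 2) := by
    intro i hi
    have hsplit : ∀ j, (i : ℚ) * j * (if (i + j) % p = r then (p : ℚ) - 1 else -1)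
        = p * i * (if (i + j) % p = r then (j : ℚ) else 0) - i * j := by
      intro j; split_ifs <;> ring
    simp only [hsplit, sum_sub_distrib, ← mul_sum, sum_range_ite_add_mod_eq hr (mem_range.1 hi),
      sum_range_natCast]
    split_ifs <;> ring
  rw [sum_congr rfl hrow, sum_sub_distrib, ← sum_mul, ← mul_sum, sum_add_distrib, ← mul_sum,
    sum_sub_distrib, ← mul_sum, sum_range_natCast, sum_range_natCast_sq,
    sum_range_ite_lt_natCast hr]
  ring

lemma prime_dvd_add_mul_iff_mod_eq {p a b r : ℕ} (hp : p.Prime) (hap : a.gcd p = 1)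
    (hr : r < p) (hb : (a * r + b) % p = 0) (m : ℕ) : p ∣ b + a * m ↔ m % p = r := by
  have := Fact.mk hp
  have ha : (a : ZMod p) ≠ 0 := by
    rw [Ne, ZMod.natCast_eq_zero_iff]
    intro hpa
    rw [Nat.gcd_eq_right hpa] at hap
    exact hp.one_lt.ne' hap
  have hb' : (a : ZMod p) * r + b = 0 := by
    exact_mod_cast (ZMod.natCast_eq_zero_iff _ _).2 (Nat.dvd_of_mod_eq_zero hb)
  rw [← ZMod.natCast_eq_zero_iff, ← Nat.mod_eq_of_lt hr, ← ZMod.natCast_eq_natCast_iff',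
    Nat.cast_add, Nat.cast_mul, show (b : ZMod p) + a * m = a * (m - r) by linear_combination hb',
    mul_eq_zero, sub_eq_zero, or_iff_right ha]

lemma sum_range_eq_add_sum_Icc {M : Type*} [AddCommMonoid M] {n : ℕ} (hn : 0 < n) (f : ℕ → M) :
    ∑ k ∈ range n, f k = f 0 + ∑ k ∈ Icc 1 (n - 1), f k := by
  have : range n = insert 0 (Icc 1 (n - 1)) := by
    ext k; simp only [mem_range, mem_insert, mem_Icc]; omega
  rw [this, sum_insert (by simp)]

lemma Finset.sum_div_mul_prod {ι F : Type*} [Field F] [DecidableEq ι] {s : Finset ι}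
    {f g : ι → F} (hg : ∀ i ∈ s, g i ≠ 0) :
    (∑ i ∈ s, f i / g i) * ∏ i ∈ s, g i = ∑ i ∈ s, f i * ∏ j ∈ s.erase i, g j := by
  rw [sum_mul]
  refine sum_congr rfl fun i hi => ?_
  rw [← mul_prod_erase s g hi, ← mul_assoc, div_mul_cancel₀ _ (hg i hi)]

section Field

variable {K : Type*} [Field K]

lemma sub_one_mul_sum_range_natCast_mul_pow (x : K) (n : ℕ) :
    (x - 1) * ∑ j ∈ range n, (j : K) * x ^ j = n * x ^ n - x * ∑ j ∈ range n, x ^ j := by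
  induction n with
  | zero => simp
  | succ n ih => rw [sum_range_succ, sum_range_succ, mul_add, ih]; push_cast; ring

lemma sum_range_natCast_mul_pow_of_pow_eq_one {x : K} {n : ℕ} (hx : x ≠ 1) (hxn : x ^ n = 1) :
    ∑ j ∈ range n, (j : K) * x ^ j = n / (x - 1) := by
  have hx' : x - 1 ≠ 0 := sub_ne_zero.2 hx
  rw [eq_div_iff hx', mul_comm, sub_one_mul_sum_range_natCast_mul_pow, geom_sum_eq hx, hxn,
    sub_self, zero_div, mul_zero, sub_zero, mul_one]

lemma IsPrimitiveRoot.sum_Icc_pow_pow {ζ : K} {p : ℕ} (hp : p.Prime) (hζ : IsPrimitiveRoot ζ p)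
    (m : ℕ) : ∑ k ∈ Icc 1 (p - 1), (ζ ^ m) ^ k = if p ∣ m then (p : K) - 1 else -1 := by
  split_ifs with hpm
  · rw [(hζ.pow_eq_one_iff_dvd m).2 hpm]
    simp [Nat.cast_sub hp.one_le]
  · have hprim := hζ.pow_of_coprime m ((Nat.coprime_comm).1 ((hp.coprime_iff_not_dvd).2 hpm))
    have hrange := sum_range_eq_add_sum_Icc hp.pos fun k => (ζ ^ m) ^ k
    rw [hprim.geom_sum_eq_zero hp.one_lt, pow_zero] at hrange
    linear_combination -hrange

lemma IsPrimitiveRoot.pow_mul_ne_one {ζ : K} {p a k : ℕ} (hp : p.Prime)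
    (hζ : IsPrimitiveRoot ζ p) (hpa : ¬ p ∣ a) (hk : k ∈ Icc 1 (p - 1)) : ζ ^ (a * k) ≠ 1 := by
  rw [Ne, hζ.pow_eq_one_iff_dvd, hp.dvd_mul, not_or]
  refine ⟨hpa, fun hpk => ?_⟩
  have := Nat.le_of_dvd (mem_Icc.1 hk).1 hpk
  grind

lemma IsPrimitiveRoot.natCast_sq_mul_sum_Icc_pow_div_sq [CharZero K] {ζ : K} {p a : ℕ}
    (hp : p.Prime) (hζ : IsPrimitiveRoot ζ p) (hpa : ¬ p ∣ a) (b : ℕ) :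
    (p : K) ^ 2 * ∑ k ∈ Icc 1 (p - 1), ζ ^ (b * k) / (ζ ^ (a * k) - 1) ^ 2
      = ∑ i ∈ range p, ∑ j ∈ range p,
          (i : K) * j * (if p ∣ b + a * (i + j) then (p : K) - 1 else -1) := by
  have hterm : ∀ k ∈ Icc 1 (p - 1), (p : K) ^ 2 * (ζ ^ (b * k) / (ζ ^ (a * k) - 1) ^ 2)
      = ∑ i ∈ range p, ∑ j ∈ range p, (i : K) * j * (ζ ^ (b + a * (i + j))) ^ k := by
    intro k hk
    have hx := hζ.pow_mul_ne_one hp hpa hk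
    have hxp : (ζ ^ (a * k)) ^ p = 1 := by
      rw [← pow_mul, mul_comm, pow_mul, hζ.pow_eq_one, one_pow]
    rw [show (p : K) ^ 2 * (ζ ^ (b * k) / (ζ ^ (a * k) - 1) ^ 2)
        = ζ ^ (b * k) * ((p / (ζ ^ (a * k) - 1)) * (p / (ζ ^ (a * k) - 1))) by
          rw [div_mul_div_comm, ← sq, ← sq]; ring,
      ← sum_range_natCast_mul_pow_of_pow_eq_one hx hxp, sum_mul_sum, mul_sum]
    refine sum_congr rfl fun i _ => ?_
    rw [mul_sum]
    refine sum_congr rfl fun j _ => ?_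
    simp only [← pow_mul]
    ring
  rw [mul_sum, sum_congr rfl hterm, sum_comm]
  refine sum_congr rfl fun i _ => ?_
  rw [sum_comm]
  refine sum_congr rfl fun j _ => ?_
  rw [← mul_sum, hζ.sum_Icc_pow_pow hp]

lemma IsPrimitiveRoot.sum_Icc_pow_div_sq [CharZero K] {ζ : K} {p a b r : ℕ} (hp : p.Prime)
    (hζ : IsPrimitiveRoot ζ p) (hap : a.gcd p = 1) (hr : r < p) (hb : (a * r + b) % p = 0) :
    ∑ k ∈ Icc 1 (p - 1), ζ ^ (b * k) / (ζ ^ (a * k) - 1) ^ 2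
      = ((-((p - 1) * (p - 5)) / 12 + r * (p - 2 - r) / 2 : ℚ) : K) := by
  have hpa : ¬ p ∣ a := hp.coprime_iff_not_dvd.1 (Nat.Coprime.symm hap)
  have hp0 : (p : K) ^ 2 ≠ 0 := pow_ne_zero 2 (Nat.cast_ne_zero.2 hp.ne_zero)
  refine mul_left_cancel₀ hp0 ?_
  rw [hζ.natCast_sq_mul_sum_Icc_pow_div_sq hp hpa b]
  simp only [prime_dvd_add_mul_iff_mod_eq hp hap hr hb]
  have h := congrArg (Rat.cast : ℚ → K) (sum_range_sum_range_mul_ite_add_mod_eq hr)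
  push_cast [apply_ite (Rat.cast : ℚ → K)] at h ⊢
  exact h

lemma aeval_qIntP {A : Type*} [CommRing A] [Algebra ℚ A] (x : A) (n : ℕ) :
    aeval x (qIntP n) = ∑ i ∈ range n, x ^ i := by
  simp [qIntP]

lemma IsPrimitiveRoot.aeval_qIntP_mul_ne_zero [CharZero K] {ζ : K} {p a k : ℕ} (hp : p.Prime)
    (hζ : IsPrimitiveRoot ζ p) (hpa : ¬ p ∣ a) (hk : k ∈ Icc 1 (p - 1)) :
    aeval ζ (qIntP (a * k)) ≠ 0 := by
  rw [aeval_qIntP, geom_sum_eq (hζ.ne_one hp.one_lt)]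
  exact div_ne_zero (sub_ne_zero.2 (hζ.pow_mul_ne_one hp hpa hk))
    (sub_ne_zero.2 (hζ.ne_one hp.one_lt))

lemma IsPrimitiveRoot.sum_Icc_pow_div_aeval_qIntP_sq [CharZero K] {ζ : K} {p a b r : ℕ}
    (hp : p.Prime) (hζ : IsPrimitiveRoot ζ p) (hap : a.gcd p = 1) (hr : r < p)
    (hb : (a * r + b) % p = 0) :
    ∑ k ∈ Icc 1 (p - 1), ζ ^ (b * k) / aeval ζ (qIntP (a * k)) ^ 2
      = (1 - ζ) ^ 2 * ((-((p - 1) * (p - 5)) / 12 + r * (p - 2 - r) / 2 : ℚ) : K) := by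
  rw [← hζ.sum_Icc_pow_div_sq hp hap hr hb, mul_sum]
  refine sum_congr rfl fun k _ => ?_
  rw [aeval_qIntP, geom_sum_eq (hζ.ne_one hp.one_lt), div_pow, div_div_eq_mul_div]
  ring

end Field

lemma qCong_one_of_aeval_eq {K : Type*} [Field K] [CharZero K] {p : ℕ} (hp : p.Prime) {ζ : K}
    (hζ : IsPrimitiveRoot ζ p) {x : RatFunc ℚ} {N B M : ℚ[X]}
    (hx : x * algebraMap ℚ[X] (RatFunc ℚ) B = algebraMap ℚ[X] (RatFunc ℚ) N)
    (hB : aeval ζ B ≠ 0) (hN : aeval ζ N = aeval ζ M * aeval ζ B) :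
    qCong p 1 x (algebraMap ℚ[X] (RatFunc ℚ) M) := by
  have := Fact.mk hp
  have hΦ : qIntP p = cyclotomic p ℚ := (cyclotomic_prime ℚ p).symm
  have hmin : qIntP p = minpoly ℚ ζ := hΦ.trans (cyclotomic_eq_minpoly_rat hζ hp.pos)
  have hirr : Irreducible (qIntP p) := hΦ ▸ cyclotomic.irreducible_rat hp.pos
  obtain ⟨A, hA⟩ : qIntP p ∣ N - M * B :=
    hmin ▸ minpoly.dvd ℚ ζ (by rw [map_sub, map_mul, hN, sub_self])
  refine ⟨A, B, ((EuclideanDomain.dvd_or_coprime _ B hirr).resolve_left ?_).symm, ?_⟩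
  · rintro ⟨C, rfl⟩
    exact hB (by rw [map_mul, hmin, minpoly.aeval, zero_mul])
  · rw [pow_one, ← hA, sub_mul, hx, map_sub, map_mul]

lemma qCong_one_sum_div_of_aeval_eq {K ι : Type*} [Field K] [CharZero K] [DecidableEq ι]
    {p : ℕ} (hp : p.Prime) {ζ : K} (hζ : IsPrimitiveRoot ζ p) {s : Finset ι}
    {f g : ι → ℚ[X]} {M : ℚ[X]} (hg : ∀ i ∈ s, aeval ζ (g i) ≠ 0)
    (h : ∑ i ∈ s, aeval ζ (f i) / aeval ζ (g i) = aeval ζ M) :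
    qCong p 1 (∑ i ∈ s, algebraMap ℚ[X] (RatFunc ℚ) (f i) / algebraMap ℚ[X] (RatFunc ℚ) (g i))
      (algebraMap ℚ[X] (RatFunc ℚ) M) := by
  refine qCong_one_of_aeval_eq hp hζ (B := ∏ i ∈ s, g i)
    (N := ∑ i ∈ s, f i * ∏ j ∈ s.erase i, g j) ?_ (by rw [map_prod]; exact prod_ne_zero_iff.2 hg) ?_
  · simp only [map_prod, map_sum, map_mul]
    exact sum_div_mul_prod fun i hi =>
      RatFunc.algebraMap_ne_zero fun h0 => hg i hi (by rw [h0, map_zero])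
  · simp only [map_prod, map_sum, map_mul]
    rw [← h, sum_div_mul_prod hg]

theorem qHarmonic_d2_general (p a b : ℕ) (hp : p.Prime) (hap : Nat.gcd a p = 1)
    (r₀ : ℕ) (hr₀ : r₀ < p) (hr : (a * r₀ + b) % p = 0) :
    qCong p 1
      (∑ k ∈ Finset.Icc 1 (p - 1), (RatFunc.X : RatFunc ℚ) ^ (b * k) / qN (a * k) ^ 2)
      ((1 - RatFunc.X) ^ 2 *
        RatFunc.C (-(((p : ℚ) - 1) * ((p : ℚ) - 5)) / 12 +
          (r₀ : ℚ) * ((p : ℚ) - 2 - (r₀ : ℚ)) / 2)) := by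
  set c : ℚ := -(((p : ℚ) - 1) * ((p : ℚ) - 5)) / 12 + (r₀ : ℚ) * ((p : ℚ) - 2 - (r₀ : ℚ)) / 2
  have hζ := Complex.isPrimitiveRoot_exp p hp.ne_zero
  have hpa : ¬ p ∣ a := hp.coprime_iff_not_dvd.1 (Nat.Coprime.symm hap)
  have hx : ∑ k ∈ Icc 1 (p - 1), (RatFunc.X : RatFunc ℚ) ^ (b * k) / qN (a * k) ^ 2
      = ∑ k ∈ Icc 1 (p - 1), algebraMap ℚ[X] (RatFunc ℚ) (X ^ (b * k))
          / algebraMap ℚ[X] (RatFunc ℚ) (qIntP (a * k) ^ 2) := by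
    simp only [map_pow, RatFunc.algebraMap_X]; rfl
  have hM : (1 - RatFunc.X) ^ 2 * RatFunc.C c
      = algebraMap ℚ[X] (RatFunc ℚ) ((1 - X) ^ 2 * C c) := by
    simp [RatFunc.algebraMap_X, RatFunc.algebraMap_C]
  rw [hx, hM]
  refine qCong_one_sum_div_of_aeval_eq hp hζ (fun k hk => ?_) ?_
  · rw [map_pow]
    exact pow_ne_zero 2 (hζ.aeval_qIntP_mul_ne_zero hp hpa hk)
  · simp only [map_pow, map_mul, map_sub, map_one, aeval_X, aeval_C, eq_ratCast]
    exact hζ.sum_Icc_pow_div_aeval_qIntP_sq hp hap hr₀ hr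

/-- For a prime `p > 2`, integers `a > 0`, `b ≥ 0` with `gcd(a,p) = 1` and
`r₀ ∈ {0,…,p-1}` with `a r₀ + b ≡ 0 (mod p)`:
`∑_{k=1}^{p-1} q^{bk}/[ak]_q² ≡ (1-q)²(−(p-1)(p-5)/12 + r₀(p-2-r₀)/2) (mod [p]_q)`. -/
theorem qHarmonic_d2 (p a b : ℕ) (hp : p.Prime) (hp2 : 2 < p)
    (ha : 0 < a) (hap : Nat.gcd a p = 1)
    (r₀ : ℕ) (hr₀ : r₀ < p) (hr : (a * r₀ + b) % p = 0) :
    qCong p 1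
      (∑ k ∈ Finset.Icc 1 (p - 1), (RatFunc.X : RatFunc ℚ) ^ (b * k) / qN (a * k) ^ 2)
      ((1 - RatFunc.X) ^ 2 *
        RatFunc.C (-(((p : ℚ) - 1) * ((p : ℚ) - 5)) / 12 +
          (r₀ : ℚ) * ((p : ℚ) - 2 - (r₀ : ℚ)) / 2)) :=
  qHarmonic_d2_general p a b hp hap r₀ hr₀ hr
end
end

section
/- Let b, b̄, a, d be non-negative integers with a·d = b + b̄ > 0, and let p > 2 be a prime with gcd(a, p) = 1. Then ∑_{k=1}^{p-1} ((-1)^{d-1} q^{bk} + q^{b̄k}) / [ak]_q^d ≡ b·(1-q)·[p]_q · ∑_{k=1}^{p-1} q^{b̄k}/[ak]_q^d − a·d·[p]_q · ∑_{k=1}^{p-1} q^{b̄k}/[ak]_q^{d+1} (mod [p]_q^2). -/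
/-!
Pair the summand of index `p - k` with that of index `k`. With `K = [ak]_q` and
`M = [ap]_q` one has `q^(ak) [a(p-k)]_q = M - K`, and `ad = b + b̄` turns
`q^(b(p-k)) / [a(p-k)]_q^d` into `q^(bp) q^(b̄k) / (M - K)^d`. Modulo `[p]_q²` we have
`M ≡ a [p]_q` and `q^(bp) ≡ 1 + b(q-1) [p]_q`, and as `[p]_q² ≡ 0` the first-order expansion
`(M - K)^(-d) ≡ (-K)^(-d) (1 + dM/K)` is exact; this gives the congruence pair by pair.
The denominators `[ak]_q` are products of cyclotomic polynomials `Φ_m` with `m ≠ p`, hence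
prime to `[p]_q = Φ_p`.
-/

open Polynomial Finset

noncomputable section

lemma qIntP_mul_X_sub_one (n : ℕ) : qIntP n * (X - 1) = X ^ n - 1 := by
  simpa [qIntP] using geom_sum_mul (X : ℚ[X]) n

lemma qIntP_ne_zero {n : ℕ} (hn : n ≠ 0) : qIntP n ≠ 0 := fun h => by
  simpa [qIntP, eval_finsetSum, hn] using congrArg (eval 1) h

lemma qIntP_add (m n : ℕ) : qIntP (m + n) = qIntP m + X ^ m * qIntP n := by
  simp only [qIntP, sum_range_add, mul_sum, pow_add]

lemma isCoprime_X_qIntP {p : ℕ} (hp : p ≠ 0) : IsCoprime (X : ℚ[X]) (qIntP p) := by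
  refine ⟨X ^ (p - 1), 1 - X, ?_⟩
  rw [← pow_succ, Nat.sub_add_cancel (Nat.pos_of_ne_zero hp)]
  linear_combination -qIntP_mul_X_sub_one p

lemma isCoprime_qIntP {m p : ℕ} (hp : p.Prime) (hm : m.Coprime p) :
    IsCoprime (qIntP m) (qIntP p) := by
  have : Fact p.Prime := ⟨hp⟩
  have hm0 : m ≠ 0 := by rintro rfl; exact hp.one_lt.ne' (Nat.coprime_zero_left p |>.mp hm)
  have hpm : ¬ p ∣ m := (hp.coprime_iff_not_dvd).mp hm.symm
  have h1 : qIntP p = cyclotomic p ℚ := by rw [cyclotomic_prime]; rfl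
  have h2 : qIntP m = ∏ i ∈ m.divisors.erase 1, cyclotomic i ℚ := by
    rw [prod_cyclotomic_eq_geom_sum (Nat.pos_of_ne_zero hm0)]; rfl
  rw [h1, h2]
  refine IsCoprime.prod_left fun i hi => cyclotomic.isCoprime_rat fun hip => hpm ?_
  exact hip ▸ (Nat.mem_divisors.mp (mem_of_mem_erase hi)).1

lemma qIntP_sq_dvd_X_pow_mul_sub (b p : ℕ) :
    qIntP p ^ 2 ∣ X ^ (b * p) - (1 + (b : ℚ[X]) * (X - 1) * qIntP p) := by
  have hXp : (X : ℚ[X]) ^ p = 1 + (X - 1) * qIntP p := by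
    linear_combination -qIntP_mul_X_sub_one p
  have h := sq_dvd_add_pow_sub_sub ((X - 1) * qIntP p) 1 b
  rw [mul_pow] at h
  refine (dvd_mul_left _ ((X - 1) ^ 2)).trans ?_
  rw [mul_comm b p, pow_mul, hXp]
  convert h using 1
  simp only [one_pow]
  ring

lemma qIntP_sq_dvd_qIntP_mul_sub (n p : ℕ) :
    qIntP p ^ 2 ∣ qIntP (n * p) - (n : ℚ[X]) * qIntP p := by
  have hgeom : qIntP (n * p) = qIntP p * ∑ i ∈ range n, (X ^ p) ^ i := by
    apply mul_right_cancel₀ (X_sub_C_ne_zero (1 : ℚ))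
    rw [C_1, qIntP_mul_X_sub_one, mul_comm (qIntP p), mul_assoc, qIntP_mul_X_sub_one,
      geom_sum_mul, ← pow_mul, mul_comm p n]
  have hdvd : X ^ p - 1 ∣ ∑ i ∈ range n, ((X : ℚ[X]) ^ p) ^ i - n := by
    have := dvd_sum fun i (_ : i ∈ range n) => sub_one_dvd_pow_sub_one ((X : ℚ[X]) ^ p) i
    rwa [sum_sub_distrib, sum_const, card_range, nsmul_one] at this
  obtain ⟨w, hw⟩ := hdvd
  refine ⟨(X - 1) * w, ?_⟩
  rw [hgeom]
  linear_combination qIntP p * hw - qIntP p * w * qIntP_mul_X_sub_one p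

lemma add_pow_of_sq_eq_zero {R : Type*} [CommRing R] {y : R} (hy : y ^ 2 = 0) (x : R) (n : ℕ) :
    (x + y) ^ (n + 1) = x ^ (n + 1) + (n + 1) * x ^ n * y := by
  simpa [derivative_X_pow] using eval_add_of_sq_eq_zero (X ^ (n + 1)) x y hy

-- The numerator of the two summands paired in `qCong_pair`, with `K = [ak]_q`.
lemma qIntP_sq_dvd_pairing_numerator (a b e p : ℕ) (K : ℚ[X]) :
    qIntP p ^ 2 ∣
      (-1) ^ e * X ^ (b * p) * K ^ (e + 2)
        + (1 + (b : ℚ[X]) * (X - 1) * qIntP p) * K * (qIntP (a * p) - K) ^ (e + 1)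
        + (a : ℚ[X]) * ((e : ℚ[X]) + 1) * qIntP p * (qIntP (a * p) - K) ^ (e + 1) := by
  set π := Ideal.Quotient.mk (Ideal.span {qIntP p ^ 2})
  have hmod {f g : ℚ[X]} (h : qIntP p ^ 2 ∣ f - g) : π f = π g :=
    (Ideal.Quotient.mk_eq_mk_iff_sub_mem f g).2 (Ideal.mem_span_singleton.2 h)
  have hε : π (qIntP p) ^ 2 = 0 := by rw [← map_pow]; exact Ideal.Quotient.mk_singleton_self _
  have hQ := hmod (qIntP_sq_dvd_X_pow_mul_sub b p)
  have hM := hmod (qIntP_sq_dvd_qIntP_mul_sub a p)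
  have hpow := add_pow_of_sq_eq_zero (y := (a : ℚ[X] ⧸ _) * π (qIntP p))
    (by rw [mul_pow, hε, mul_zero]) (-π K) e
  rw [← Ideal.Quotient.eq_zero_iff_dvd]
  simp only [map_add, map_mul, map_sub, map_pow, map_neg, map_one, map_natCast] at hQ hM ⊢
  rw [neg_add_eq_sub] at hpow
  rw [hQ, hM, hpow]
  linear_combination (-1) ^ e * (b * (π X - 1) * a * (e + 1) * π K ^ (e + 1)
    + a ^ 2 * (e + 1) ^ 2 * π K ^ e : ℚ[X] ⧸ Ideal.span {qIntP p ^ 2}) * hε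

lemma qCong_add {p r : ℕ} {x y x' y' : RatFunc ℚ} (h : qCong p r x y) (h' : qCong p r x' y') :
    qCong p r (x + x') (y + y') := by
  obtain ⟨A, B, hB, hE⟩ := h
  obtain ⟨A', B', hB', hE'⟩ := h'
  refine ⟨A * B' + A' * B, B * B', hB.mul_left hB', ?_⟩
  simp only [map_mul, map_add, map_pow] at hE hE' ⊢
  linear_combination
    algebraMap ℚ[X] (RatFunc ℚ) B' * hE + algebraMap ℚ[X] (RatFunc ℚ) B * hE'

lemma qCong_sum {p r : ℕ} {s : Finset ℕ} {f g : ℕ → RatFunc ℚ}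
    (h : ∀ i ∈ s, qCong p r (f i) (g i)) : qCong p r (∑ i ∈ s, f i) (∑ i ∈ s, g i) := by
  induction s using Finset.cons_induction with
  | empty => exact ⟨0, 1, isCoprime_one_left, by simp⟩
  | cons i s his ih =>
    rw [sum_cons, sum_cons]
    exact qCong_add (h i (mem_cons_self i s)) (ih fun j hj => h j (mem_cons_of_mem hj))

lemma qCong_pair {a b bb e p k j : ℕ} (hbd : a * (e + 1) = b + bb) (hkj : k + j = p)
    (hK : IsCoprime (qIntP (a * k)) (qIntP p)) (hL : IsCoprime (qIntP (a * j)) (qIntP p))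
    (hk : a * k ≠ 0) (hj : a * j ≠ 0) :
    qCong p 2
      ((-1 : RatFunc ℚ) ^ e * RatFunc.X ^ (b * j) / qN (a * j) ^ (e + 1)
        + RatFunc.X ^ (bb * k) / qN (a * k) ^ (e + 1))
      ((b : RatFunc ℚ) * (1 - RatFunc.X) * qN p * (RatFunc.X ^ (bb * k) / qN (a * k) ^ (e + 1))
        - (a : RatFunc ℚ) * ((e + 1 : ℕ) : RatFunc ℚ) * qN p *
          (RatFunc.X ^ (bb * k) / qN (a * k) ^ (e + 1 + 1))) := by
  subst hkj
  obtain ⟨W, hW⟩ := qIntP_sq_dvd_pairing_numerator a b e (k + j) (qIntP (a * k))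
  have hML : qIntP (a * (k + j)) - qIntP (a * k) = X ^ (a * k) * qIntP (a * j) := by
    rw [Nat.mul_add, qIntP_add]; ring
  have hexp : a * k * (e + 1) = b * k + bb * k := by rw [mul_right_comm, hbd, add_mul]
  rw [hML, mul_pow, ← pow_mul, hexp] at hW
  have hX : IsCoprime (X : ℚ[X]) (qIntP (k + j)) := isCoprime_X_qIntP (by grind)
  refine ⟨X ^ (bb * k) * W,
    X ^ (b * k + bb * k) * qIntP (a * k) ^ (e + 2) * qIntP (a * j) ^ (e + 1),
    (hX.pow_left.mul_left hK.pow_left).mul_left hL.pow_left, ?_⟩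
  have hK0 := RatFunc.algebraMap_ne_zero (qIntP_ne_zero hk)
  have hL0 := RatFunc.algebraMap_ne_zero (qIntP_ne_zero hj)
  rw [mul_left_comm, ← hW]
  simp only [qN, ← RatFunc.algebraMap_X, map_mul, map_add, map_sub, map_pow, map_one,
    map_natCast, map_neg]
  field_simp
  push_cast
  ring

lemma sum_Icc_one_sub_reflect {M : Type*} [AddCommMonoid M] (f : ℕ → M) (n : ℕ) :
    ∑ k ∈ Icc 1 (n - 1), f (n - k) = ∑ k ∈ Icc 1 (n - 1), f k :=
  sum_nbij' (n - ·) (n - ·) (fun k hk => by rw [mem_Icc] at hk ⊢; omega)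
    (fun k hk => by rw [mem_Icc] at hk ⊢; omega) (fun k hk => by rw [mem_Icc] at hk; omega)
    (fun k hk => by rw [mem_Icc] at hk; omega)
    fun _ _ => rfl

theorem qHpos_general (b bb a d : ℕ) (hbd : a * d = b + bb) (hpos : 0 < b + bb)
    (p : ℕ) (hp : p.Prime) (hap : Nat.gcd a p = 1) :
    qCong p 2
      (∑ k ∈ Finset.Icc 1 (p - 1),
        ((-1 : RatFunc ℚ) ^ (d - 1) * RatFunc.X ^ (b * k) + RatFunc.X ^ (bb * k)) /
          qN (a * k) ^ d)
      ((b : RatFunc ℚ) * (1 - RatFunc.X) * qN p *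
          ∑ k ∈ Finset.Icc 1 (p - 1), (RatFunc.X : RatFunc ℚ) ^ (bb * k) / qN (a * k) ^ d
        - (a : RatFunc ℚ) * (d : RatFunc ℚ) * qN p *
          ∑ k ∈ Finset.Icc 1 (p - 1),
            (RatFunc.X : RatFunc ℚ) ^ (bb * k) / qN (a * k) ^ (d + 1)) := by
  obtain ⟨e, rfl⟩ : ∃ e, d = e + 1 := Nat.exists_eq_succ_of_ne_zero (by rintro rfl; omega)
  have ha : a ≠ 0 := by rintro rfl; exact hp.one_lt.ne' (by simpa using hap)
  have hcop {k : ℕ} (hk : k ∈ Icc 1 (p - 1)) : IsCoprime (qIntP (a * k)) (qIntP p) := by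
    rw [mem_Icc] at hk
    exact isCoprime_qIntP hp
      (Nat.Coprime.mul_left hap (Nat.coprime_of_lt_prime (by omega) (by omega) hp).symm)
  have hrefl {k : ℕ} (hk : k ∈ Icc 1 (p - 1)) : p - k ∈ Icc 1 (p - 1) := by
    rw [mem_Icc] at hk ⊢; omega
  rw [Nat.add_sub_cancel]
  simp only [add_div, sum_add_distrib, mul_sum, ← sum_sub_distrib]
  rw [← sum_Icc_one_sub_reflect, ← sum_add_distrib]
  refine qCong_sum fun k hk => qCong_pair hbd (Nat.add_sub_cancel' ?_) (hcop hk) (hcop (hrefl hk))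
    (Nat.mul_ne_zero ha ?_) (Nat.mul_ne_zero ha ?_) <;> grind

/-- For non-negative integers `b, b̄, a, d` with `a·d = b + b̄ > 0` and a prime
`p > 2` with `gcd(a, p) = 1`:
`∑_{k=1}^{p-1} ((-1)^{d-1} q^{bk} + q^{b̄k})/[ak]_q^d ≡
  b(1-q)[p]_q ∑_{k=1}^{p-1} q^{b̄k}/[ak]_q^d − ad[p]_q ∑_{k=1}^{p-1} q^{b̄k}/[ak]_q^{d+1}
(mod [p]_q²)`. -/
theorem qHpos (b bb a d : ℕ) (hbd : a * d = b + bb) (hpos : 0 < b + bb)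
    (p : ℕ) (hp : p.Prime) (hp2 : 2 < p) (hap : Nat.gcd a p = 1) :
    qCong p 2
      (∑ k ∈ Finset.Icc 1 (p - 1),
        ((-1 : RatFunc ℚ) ^ (d - 1) * RatFunc.X ^ (b * k) + RatFunc.X ^ (bb * k)) /
          qN (a * k) ^ d)
      ((b : RatFunc ℚ) * (1 - RatFunc.X) * qN p *
          ∑ k ∈ Finset.Icc 1 (p - 1), (RatFunc.X : RatFunc ℚ) ^ (bb * k) / qN (a * k) ^ d
        - (a : RatFunc ℚ) * (d : RatFunc ℚ) * qN p *
          ∑ k ∈ Finset.Icc 1 (p - 1),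
            (RatFunc.X : RatFunc ℚ) ^ (bb * k) / qN (a * k) ^ (d + 1)) :=
  qHpos_general b bb a d hbd hpos p hp hap
end
end

section
/- Let p be an odd prime and a a positive integer. Then the Gaussian q-binomial coefficient satisfies binom_q(ap−1, p−1) ≡ q^{(a−1)·C(p,2)} (mod [p]_q^2). -/
/-!
Write the `q`-binomial coefficient as `G / H` with `G = (q^((a-1)p+1); q)_(p-1)` and
`H = (q; q)_(p-1)`. Since `[p]_q` is the `p`-th cyclotomic polynomial, which is irreducible and
separable over `ℚ`, its square divides `G - q^m H` (where `m = (a-1) C(p,2)`) as soon as this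
polynomial and its derivative vanish at a primitive `p`-th root of unity `θ`. At `θ` both `G` and
`H` become `∏ (1 - θ^j)`, and `θ^m = 1` because `p ∣ m` for odd `p`. The logarithmic derivatives
of `G` and `H` at `θ` differ by `(a-1)p ∑_{j=1}^{p-1} θ^j / (1 - θ^j)`; pairing `j` with `p - j`
shows that this sum is `-(p-1)/2`, which exactly cancels the contribution `m` of `q^m`.
-/
open Polynomial Finset

noncomputable section

/-- The polynomial `(q^(N+1); q)_k = ∏_{j=1}^{k} (1 - q^(N+j))`. -/
def shiftedQPoch (N k : ℕ) : ℚ[X] := ∏ j ∈ range k, (1 - X ^ (N + j + 1))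

theorem eval_zero_shiftedQPoch (N k : ℕ) : (shiftedQPoch N k).eval 0 = 1 := by
  simp [shiftedQPoch, eval_prod]

theorem shiftedQPoch_ne_zero (N k : ℕ) : shiftedQPoch N k ≠ 0 := fun h => by
  simpa [h] using eval_zero_shiftedQPoch N k

theorem qqPoch_eq_shiftedQPoch_zero (k : ℕ) :
    qqPoch k = algebraMap ℚ[X] (RatFunc ℚ) (shiftedQPoch 0 k) := by
  simp [qqPoch, shiftedQPoch]

theorem qqPoch_add (N k : ℕ) :
    qqPoch (N + k) = qqPoch N * algebraMap ℚ[X] (RatFunc ℚ) (shiftedQPoch N k) := by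
  rw [qqPoch, qqPoch, shiftedQPoch, prod_range_add, map_mul]

theorem qbin_add_self (N k : ℕ) :
    qbin (N + k) k = algebraMap ℚ[X] (RatFunc ℚ) (shiftedQPoch N k) /
      algebraMap ℚ[X] (RatFunc ℚ) (shiftedQPoch 0 k) := by
  have hN : qqPoch N ≠ 0 := by
    rw [qqPoch_eq_shiftedQPoch_zero]; exact RatFunc.algebraMap_ne_zero (shiftedQPoch_ne_zero 0 N)
  rw [qbin, if_pos (Nat.le_add_left k N), Nat.add_sub_cancel, qqPoch_add,
    qqPoch_eq_shiftedQPoch_zero k, mul_comm _ (qqPoch N), mul_div_mul_left _ _ hN]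

theorem qCong_div_of_dvd {p r : ℕ} {f g h : ℚ[X]} (hg : g ≠ 0) (hcop : IsCoprime g (qIntP p))
    (hdvd : qIntP p ^ r ∣ f - h * g) :
    qCong p r (algebraMap ℚ[X] (RatFunc ℚ) f / algebraMap ℚ[X] (RatFunc ℚ) g)
      (algebraMap ℚ[X] (RatFunc ℚ) h) := by
  obtain ⟨c, hc⟩ := hdvd
  refine ⟨c, g, hcop, ?_⟩
  rw [sub_mul, div_mul_cancel₀ _ (RatFunc.algebraMap_ne_zero hg), ← map_mul, ← map_sub, hc]

theorem sq_dvd_of_dvd_of_dvd_derivative {R : Type*} [CommRing R] {π f : R[X]}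
    (hsep : π.Separable) (hf : π ∣ f) (hf' : π ∣ derivative f) : π ^ 2 ∣ f := by
  obtain ⟨g, rfl⟩ := hf
  have hg : π ∣ g := by
    refine hsep.dvd_of_dvd_mul_left ?_
    rw [derivative_mul] at hf'
    simpa using (dvd_add_left (dvd_mul_right π (derivative g))).mp hf'
  obtain ⟨h, rfl⟩ := hg
  exact ⟨h, by ring⟩

theorem aeval_derivative_prod {R K ι : Type*} [CommSemiring R] [Field K] [Algebra R K]
    [DecidableEq ι] (s : Finset ι) (g : ι → R[X]) (x : K) (hg : ∀ i ∈ s, aeval x (g i) ≠ 0) :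
    aeval x (derivative (∏ i ∈ s, g i)) =
      aeval x (∏ i ∈ s, g i) * ∑ i ∈ s, aeval x (derivative (g i)) / aeval x (g i) := by
  rw [derivative_prod_finset, map_sum, mul_sum]
  refine sum_congr rfl fun i hi => ?_
  rw [map_mul, map_prod, map_prod, ← mul_prod_erase s _ hi]
  field_simp [hg i hi]

theorem div_one_sub_add_div_one_sub_of_mul_eq_one {K : Type*} [Field K] {u w : K}
    (huw : u * w = 1) (hu : u ≠ 1) : u / (1 - u) + w / (1 - w) = -1 := by
  have hw : w ≠ 1 := by rintro rfl; exact hu (by simpa using huw)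
  rw [div_add_div _ _ (sub_ne_zero.mpr hu.symm) (sub_ne_zero.mpr hw.symm),
    div_eq_iff (mul_ne_zero (sub_ne_zero.mpr hu.symm) (sub_ne_zero.mpr hw.symm))]
  linear_combination -huw

namespace IsPrimitiveRoot

variable {K : Type*} [Field K] {n : ℕ} {θ : K}

theorem prod_one_sub_pow_ne_zero (hθ : IsPrimitiveRoot θ n) {k : ℕ} (hk : k < n) :
    ∏ j ∈ range k, (1 - θ ^ (j + 1)) ≠ 0 :=
  prod_ne_zero_iff.mpr fun j hj => sub_ne_zero.mpr
    (hθ.pow_ne_one_of_pos_of_lt (Nat.succ_ne_zero j) (by have := mem_range.mp hj; omega)).symm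

theorem two_mul_sum_div_one_sub (hθ : IsPrimitiveRoot θ n) :
    2 * ∑ j ∈ range (n - 1), θ ^ (j + 1) / (1 - θ ^ (j + 1)) = -((n - 1 : ℕ) : K) := by
  set g : ℕ → K := fun j => θ ^ (j + 1) / (1 - θ ^ (j + 1))
  have hpair : ∀ j ∈ range (n - 1), g j + g (n - 1 - 1 - j) = -1 := fun j hj => by
    have hj := mem_range.mp hj
    refine div_one_sub_add_div_one_sub_of_mul_eq_one ?_
      (hθ.pow_ne_one_of_pos_of_lt (by omega) (by omega))
    rw [← pow_add, show j + 1 + (n - 1 - 1 - j + 1) = n by omega, hθ.pow_eq_one]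
  calc 2 * ∑ j ∈ range (n - 1), g j
      = ∑ j ∈ range (n - 1), (g j + g (n - 1 - 1 - j)) := by
        rw [sum_add_distrib, sum_range_reflect g]; ring
    _ = -((n - 1 : ℕ) : K) := by simp [sum_congr rfl hpair]

end IsPrimitiveRoot

section RootOfUnity

variable {K : Type*} [Field K] [CharZero K] {θ : K} {N : ℕ}

theorem aeval_one_sub_X_pow (hN : θ ^ N = 1) (j : ℕ) :
    aeval θ (1 - X ^ (N + j + 1) : ℚ[X]) = 1 - θ ^ (j + 1) := by
  simp [add_assoc, pow_add θ N, hN]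

theorem mul_aeval_derivative_one_sub_X_pow (hN : θ ^ N = 1) (j : ℕ) :
    θ * aeval θ (derivative (1 - X ^ (N + j + 1) : ℚ[X])) =
      -((N + j + 1 : ℕ) : K) * θ ^ (j + 1) := by
  simp [pow_add θ N, hN]
  ring

theorem aeval_shiftedQPoch (hN : θ ^ N = 1) (k : ℕ) :
    aeval θ (shiftedQPoch N k) = ∏ j ∈ range k, (1 - θ ^ (j + 1)) := by
  simp only [shiftedQPoch, map_prod, aeval_one_sub_X_pow hN]

theorem IsPrimitiveRoot.mul_aeval_derivative_shiftedQPoch {n : ℕ} (hθ : IsPrimitiveRoot θ n)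
    (hN : θ ^ N = 1) {k : ℕ} (hk : k < n) :
    θ * aeval θ (derivative (shiftedQPoch N k)) =
      -(∏ j ∈ range k, (1 - θ ^ (j + 1))) *
        ∑ j ∈ range k, ((N + j + 1 : ℕ) : K) * (θ ^ (j + 1) / (1 - θ ^ (j + 1))) := by
  have hfac : ∀ j ∈ range k, aeval θ (1 - X ^ (N + j + 1) : ℚ[X]) ≠ 0 := fun j hj => by
    rw [aeval_one_sub_X_pow hN]
    exact prod_ne_zero_iff.mp (hθ.prod_one_sub_pow_ne_zero hk) j hj
  rw [shiftedQPoch, aeval_derivative_prod _ _ _ hfac, ← shiftedQPoch, aeval_shiftedQPoch hN,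
    mul_left_comm, neg_mul, ← mul_neg, ← sum_neg_distrib, mul_sum]
  refine congrArg _ (sum_congr rfl fun j _ => ?_)
  rw [← mul_div_assoc, mul_aeval_derivative_one_sub_X_pow hN, aeval_one_sub_X_pow hN]
  ring

theorem IsPrimitiveRoot.aeval_derivative_shiftedQPoch_sub_eq_zero {n m : ℕ}
    (hθ : IsPrimitiveRoot θ n) (hn : 0 < n) (hN : n ∣ N) (hm : n ∣ m)
    (h2m : 2 * m = N * (n - 1)) :
    aeval θ (derivative (shiftedQPoch N (n - 1) - X ^ m * shiftedQPoch 0 (n - 1))) = 0 := by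
  have hθN : θ ^ N = 1 := (hθ.pow_eq_one_iff_dvd N).2 hN
  have hθm : θ ^ m = 1 := (hθ.pow_eq_one_iff_dvd m).2 hm
  have hk : n - 1 < n := Nat.sub_lt hn one_pos
  have hXm : θ * ((m : K) * θ ^ (m - 1)) = m := by
    rcases m with _ | m
    · simp
    · rw [Nat.add_sub_cancel, mul_left_comm, ← pow_succ', hθm, mul_one]
  set t : ℕ → K := fun j => θ ^ (j + 1) / (1 - θ ^ (j + 1))
  have hsplit : ∑ j ∈ range (n - 1), ((N + j + 1 : ℕ) : K) * t j =
      N * ∑ j ∈ range (n - 1), t j + ∑ j ∈ range (n - 1), ((0 + j + 1 : ℕ) : K) * t j := by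
    rw [mul_sum, ← sum_add_distrib]
    refine sum_congr rfl fun j _ => ?_
    push_cast
    ring
  have h2mK : (2 * m : K) = N * ((n - 1 : ℕ) : K) := by exact_mod_cast h2m
  have hS := hθ.two_mul_sum_div_one_sub
  refine (mul_eq_zero.mp ?_).resolve_left (hθ.ne_zero hn.ne')
  -- The shift by `N` adds `N * ∑ t j = -N (n - 1) / 2` to the logarithmic derivative, which the
  -- factor `X ^ m` cancels.
  have expand : θ * aeval θ (derivative (shiftedQPoch N (n - 1) - X ^ m * shiftedQPoch 0 (n - 1))) =
      θ * aeval θ (derivative (shiftedQPoch N (n - 1))) -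
        (θ * ((m : K) * θ ^ (m - 1)) * aeval θ (shiftedQPoch 0 (n - 1)) +
          θ ^ m * (θ * aeval θ (derivative (shiftedQPoch 0 (n - 1))))) := by
    simp only [derivative_mul, derivative_X_pow, map_sub, map_add, map_mul, map_pow, aeval_X,
      map_natCast]
    ring
  rw [expand, hXm, hθm, hθ.mul_aeval_derivative_shiftedQPoch hθN hk,
    hθ.mul_aeval_derivative_shiftedQPoch (pow_zero θ) hk, aeval_shiftedQPoch (pow_zero θ), hsplit]
  linear_combination (-(∏ j ∈ range (n - 1), (1 - θ ^ (j + 1))) / 2) * ((N : K) * hS + h2mK)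

theorem IsPrimitiveRoot.cyclotomic_dvd_iff {n : ℕ} (hθ : IsPrimitiveRoot θ n) (hn : 0 < n)
    {f : ℚ[X]} : cyclotomic n ℚ ∣ f ↔ aeval θ f = 0 := by
  rw [cyclotomic_eq_minpoly_rat hθ hn]
  exact minpoly.dvd_iff

end RootOfUnity

theorem not_cyclotomic_dvd_shiftedQPoch_zero {n k : ℕ} (hk : k < n) :
    ¬ cyclotomic n ℚ ∣ shiftedQPoch 0 k := by
  have hθ := Complex.isPrimitiveRoot_exp n (by omega)
  rw [hθ.cyclotomic_dvd_iff (by omega), aeval_shiftedQPoch (pow_zero _)]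
  exact hθ.prod_one_sub_pow_ne_zero hk

theorem cyclotomic_sq_dvd_shiftedQPoch_sub {n N m : ℕ} (hn : 0 < n) (hN : n ∣ N) (hm : n ∣ m)
    (h2m : 2 * m = N * (n - 1)) :
    cyclotomic n ℚ ^ 2 ∣ shiftedQPoch N (n - 1) - X ^ m * shiftedQPoch 0 (n - 1) := by
  have hθ := Complex.isPrimitiveRoot_exp n hn.ne'
  refine sq_dvd_of_dvd_of_dvd_derivative (cyclotomic.irreducible_rat hn).separable ?_
    ((hθ.cyclotomic_dvd_iff hn).2 (hθ.aeval_derivative_shiftedQPoch_sub_eq_zero hn hN hm h2m))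
  rw [hθ.cyclotomic_dvd_iff hn, map_sub, map_mul, map_pow, aeval_X,
    (hθ.pow_eq_one_iff_dvd m).2 hm, one_mul, aeval_shiftedQPoch ((hθ.pow_eq_one_iff_dvd N).2 hN),
    aeval_shiftedQPoch (pow_zero _), sub_self]

/-- For an odd prime `p` and a positive integer `a`:
`binom_q(ap−1, p−1) ≡ q^{(a−1)C(p,2)} (mod [p]_q²)`. -/
theorem qbin_ap_sub_one_p_sub_one (p a : ℕ) (hp : p.Prime) (hodd : Odd p) (ha : 0 < a) :
    qCong p 2 (qbin (a * p - 1) (p - 1))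
      ((RatFunc.X : RatFunc ℚ) ^ ((a - 1) * p.choose 2)) := by
  have : Fact p.Prime := ⟨hp⟩
  have hqIntP : qIntP p = cyclotomic p ℚ := (cyclotomic_prime ℚ p).symm
  have hap : a * p - 1 = (a - 1) * p + (p - 1) := by
    have := hp.one_lt
    have := Nat.le_mul_of_pos_left p ha
    rw [Nat.sub_one_mul]
    omega
  obtain ⟨t, ht⟩ := hodd
  have hchoose : p.choose 2 = p * t := by
    rw [Nat.choose_two_right, show p - 1 = 2 * t by omega, mul_left_comm,
      Nat.mul_div_cancel_left _ two_pos]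
  have hm : p ∣ (a - 1) * p.choose 2 := ⟨(a - 1) * t, by rw [hchoose]; ring⟩
  have h2m : 2 * ((a - 1) * p.choose 2) = (a - 1) * p * (p - 1) := by
    rw [hchoose, show p - 1 = 2 * t by omega]; ring
  rw [hap, qbin_add_self, ← RatFunc.algebraMap_X, ← map_pow]
  refine qCong_div_of_dvd (shiftedQPoch_ne_zero 0 _) ?_ ?_
  · rw [hqIntP, isCoprime_comm, (cyclotomic.irreducible_rat hp.pos).coprime_iff_not_dvd]
    exact not_cyclotomic_dvd_shiftedQPoch_zero (Nat.sub_lt hp.pos one_pos)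
  · rw [hqIntP]
    exact cyclotomic_sq_dvd_shiftedQPoch_sub hp.pos (dvd_mul_left _ _) hm h2m
end
end

section
/- For every positive integer n, the following identity of rational functions in q holds: ∑_{k=1}^{n} ( (-1)^k (1 + q^k + q^{2k}) / ((−q;q)_k · [k]_q) ) · binom_q(2k, k)^{−1} = (1/(−q;q)_n) · ∑_{k=1}^{n} ( (-1)^k / [k]_q ) · binom_q(n+k, k)^{−1} − ∑_{k=1}^{n} q^k / ((−q;q)_k · [k]_q). -/
/-!
Write `S n = ∑_{k=1}^n (-1)^k / [k]_q · binom_q(n+k,k)⁻¹`. Both sides vanish at `n = 0`, so it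
suffices to show that they have the same increments, i.e. that `S (n+1)` equals
`(1 + q^(n+1)) S n + q^(n+1) / [n+1]_q
  + (-1)^(n+1) (1 + q^(n+1) + q^(2n+2)) / [n+1]_q · binom_q(2n+2,n+1)⁻¹`.
The difference `S (n+1) - (1 + q^(n+1)) S n` telescopes: its `k`-th summand is `G k - G (k-1)`
for the Gosper-type antidifference `G k = (-1)^(k+1) q^(n+1) (1-q) (q;q)_n (q;q)_k / (q;q)_(n+k+1)`,
and the boundary values `G 0`, `G n` combine with the last summand of `S (n+1)` into the two
extra terms.
-/

open Polynomial Finset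

noncomputable section

local notation "q" => (RatFunc.X : RatFunc ℚ)

@[simp]
lemma one_sub_q_pow_ne_zero {m : ℕ} (hm : m ≠ 0) : 1 - q ^ m ≠ 0 := by
  have h : (1 - X ^ m : ℚ[X]) ≠ 0 := fun h => by simpa [hm] using congrArg (eval 0) h
  simpa [RatFunc.algebraMap_X] using
    (map_ne_zero_iff _ (RatFunc.algebraMap_injective ℚ)).mpr h

@[simp]
lemma one_add_q_pow_ne_zero {m : ℕ} (hm : m ≠ 0) : 1 + q ^ m ≠ 0 := by
  have h : (1 + X ^ m : ℚ[X]) ≠ 0 := fun h => by simpa [hm] using congrArg (eval 0) h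
  simpa [RatFunc.algebraMap_X] using
    (map_ne_zero_iff _ (RatFunc.algebraMap_injective ℚ)).mpr h

lemma qN_eq_div (k : ℕ) : qN k = (1 - q ^ k) / (1 - q) := by
  rw [eq_div_iff (by simpa using one_sub_q_pow_ne_zero one_ne_zero)]
  simp only [qN, qIntP, map_sum, map_pow, RatFunc.algebraMap_X]
  linear_combination -geom_sum_mul q k

lemma qqPoch_zero : qqPoch 0 = 1 := by simp [qqPoch]

lemma qqPoch_succ (n : ℕ) : qqPoch (n + 1) = qqPoch n * (1 - q ^ (n + 1)) := by
  simp [qqPoch, prod_range_succ, RatFunc.algebraMap_X]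

lemma nqPoch_succ (n : ℕ) : nqPoch (n + 1) = nqPoch n * (1 + q ^ (n + 1)) := by
  simp [nqPoch, prod_range_succ, RatFunc.algebraMap_X]

@[simp]
lemma qqPoch_ne_zero (n : ℕ) : qqPoch n ≠ 0 := by
  induction n with
  | zero => simp [qqPoch_zero]
  | succ m ih => rw [qqPoch_succ]; exact mul_ne_zero ih (by simp)

@[simp]
lemma nqPoch_ne_zero (n : ℕ) : nqPoch n ≠ 0 := by
  induction n with
  | zero => simp [nqPoch]
  | succ m ih => rw [nqPoch_succ]; exact mul_ne_zero ih (by simp)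

lemma inv_qbin_add (a b : ℕ) : (qbin (a + b) b)⁻¹ = qqPoch b * qqPoch a / qqPoch (a + b) := by
  rw [qbin, if_pos (Nat.le_add_left b a), Nat.add_sub_cancel, inv_div]

lemma sum_Icc_one_eq_sum_range {M : Type*} [AddCommMonoid M] (f : ℕ → M) (n : ℕ) :
    ∑ k ∈ Icc 1 n, f k = ∑ j ∈ range n, f (j + 1) := by
  rw [← Ico_add_one_right_eq_Icc, sum_Ico_eq_sum_range, Nat.add_sub_cancel]
  simp only [add_comm 1]

def invQbinTerm (n k : ℕ) : RatFunc ℚ := (-1) ^ k / qN k * (qbin (n + k) k)⁻¹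

def invQbinSum (n : ℕ) : RatFunc ℚ := ∑ k ∈ Icc 1 n, invQbinTerm n k

def invQbinAntidiff (n k : ℕ) : RatFunc ℚ :=
  (-1) ^ (k + 1) * q ^ (n + 1) * (1 - q) * qqPoch n * qqPoch k / qqPoch (n + k + 1)

lemma invQbinTerm_succ_sub (n j : ℕ) :
    invQbinTerm (n + 1) (j + 1) - (1 + q ^ (n + 1)) * invQbinTerm n (j + 1) =
      invQbinAntidiff n (j + 1) - invQbinAntidiff n j := by
  have hA : qqPoch (n + 1 + (j + 1)) =
      qqPoch (n + j) * (1 - q ^ (n + j + 1)) * (1 - q ^ (n + j + 1 + 1)) := by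
    rw [show n + 1 + (j + 1) = n + j + 1 + 1 by omega, qqPoch_succ, qqPoch_succ]
  have hB : n + (j + 1) = n + j + 1 := by omega
  rw [invQbinTerm, invQbinTerm, inv_qbin_add, inv_qbin_add, hA, hB]
  simp only [invQbinAntidiff, hB, qqPoch_succ, qN_eq_div]
  field_simp
  ring

lemma invQbinAntidiff_zero (n : ℕ) : invQbinAntidiff n 0 = -(q ^ (n + 1) / qN (n + 1)) := by
  rw [invQbinAntidiff, qqPoch_zero, Nat.add_zero, qqPoch_succ, qN_eq_div]
  field_simp

lemma invQbinAntidiff_self_add_invQbinTerm (n : ℕ) :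
    invQbinAntidiff n n + invQbinTerm (n + 1) (n + 1) =
      (-1) ^ (n + 1) * (1 + q ^ (n + 1) + q ^ (2 * (n + 1))) / qN (n + 1) *
        (qbin (2 * (n + 1)) (n + 1))⁻¹ := by
  have hA : qqPoch (n + 1 + (n + 1)) =
      qqPoch (n + n) * (1 - q ^ (n + n + 1)) * (1 - q ^ (n + n + 1 + 1)) := by
    rw [show n + 1 + (n + 1) = n + n + 1 + 1 by omega, qqPoch_succ, qqPoch_succ]
  rw [invQbinAntidiff, invQbinTerm, two_mul, inv_qbin_add, hA, qqPoch_succ n, qqPoch_succ (n + n),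
    qN_eq_div]
  field_simp
  ring

lemma invQbinSum_succ (n : ℕ) :
    invQbinSum (n + 1) = (1 + q ^ (n + 1)) * invQbinSum n + q ^ (n + 1) / qN (n + 1) +
      (-1) ^ (n + 1) * (1 + q ^ (n + 1) + q ^ (2 * (n + 1))) / qN (n + 1) *
        (qbin (2 * (n + 1)) (n + 1))⁻¹ := by
  have htel : ∑ k ∈ Icc 1 n, invQbinTerm (n + 1) k - (1 + q ^ (n + 1)) * invQbinSum n =
      invQbinAntidiff n n - invQbinAntidiff n 0 := by
    rw [invQbinSum, mul_sum, ← sum_sub_distrib, sum_Icc_one_eq_sum_range]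
    simp only [invQbinTerm_succ_sub]
    exact sum_range_sub _ n
  rw [invQbinSum, sum_Icc_succ_top (by omega)]
  linear_combination htel + invQbinAntidiff_self_add_invQbinTerm n - invQbinAntidiff_zero n

theorem qid2_general (n : ℕ) :
    ∑ k ∈ Finset.Icc 1 n,
        (-1 : RatFunc ℚ) ^ k * (1 + RatFunc.X ^ k + RatFunc.X ^ (2 * k)) /
          (nqPoch k * qN k) * (qbin (2 * k) k)⁻¹
      = (nqPoch n)⁻¹ *
          ∑ k ∈ Finset.Icc 1 n, (-1 : RatFunc ℚ) ^ k / qN k * (qbin (n + k) k)⁻¹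
        - ∑ k ∈ Finset.Icc 1 n, (RatFunc.X : RatFunc ℚ) ^ k / (nqPoch k * qN k) := by
  change _ = (nqPoch n)⁻¹ * invQbinSum n - _
  induction n with
  | zero => simp [invQbinSum]
  | succ n ih =>
    rw [sum_Icc_succ_top (by omega), sum_Icc_succ_top (by omega), ih, invQbinSum_succ,
      nqPoch_succ]
    field_simp
    ring

/-- For every positive integer `n`, the identity of rational functions:
`∑_{k=1}^{n} ((-1)^k (1+q^k+q^{2k})/((−q;q)_k [k]_q)) binom_q(2k,k)⁻¹
  = (1/(−q;q)_n) ∑_{k=1}^{n} ((-1)^k/[k]_q) binom_q(n+k,k)⁻¹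
    − ∑_{k=1}^{n} q^k/((−q;q)_k [k]_q)`. -/
theorem qid2 (n : ℕ) (hn : 0 < n) :
    ∑ k ∈ Finset.Icc 1 n,
        (-1 : RatFunc ℚ) ^ k * (1 + RatFunc.X ^ k + RatFunc.X ^ (2 * k)) /
          (nqPoch k * qN k) * (qbin (2 * k) k)⁻¹
      = (nqPoch n)⁻¹ *
          ∑ k ∈ Finset.Icc 1 n, (-1 : RatFunc ℚ) ^ k / qN k * (qbin (n + k) k)⁻¹
        - ∑ k ∈ Finset.Icc 1 n, (RatFunc.X : RatFunc ℚ) ^ k / (nqPoch k * qN k) :=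
  qid2_general n
end
end
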